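/- Let β ≥ 1, α < β + 1 be real numbers and λ a real constant. For x > 0, the function G(x) = x^{β−α+1}/(β−α+1) · ∑_{n=0}^∞ [ (c)_n / ((c+1)_n (3/2)_n) ] (−λ²x^{2β}/4)ⁿ/n!, where c = −α/(2β) + 1/(2β) + 1/2, satisfies G'(x) = sin(λx^β)/(λx^α). -/

import Mathlib

noncomputable def poch (a : ℝ) (n : ℕ) : ℝ := ∏ i ∈ Finset.range n, (a + (i : ℝ))

/-!
With `e = β - α + 1` and `c = e / (2β)` one has `(c)_n / (c + 1)_n = e / (e + 2βn)` and
`4ⁿ n! (3/2)_n = (2n + 1)!`, so the series is `Σ (-1)ⁿ l²ⁿ x^(e + 2βn) / ((2n + 1)! (e + 2βn))`.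
Differentiating termwise (the coefficients are dominated by `(l²)ⁿ / n!`, uniformly near `x`)
gives `Σ (-1)ⁿ l²ⁿ x^(β - α + 2βn) / (2n + 1)!`, which is the sine series of `l x^β`
divided by `l x^α`.
-/

open Real Nat Set

lemma poch_succ (a : ℝ) (n : ℕ) : poch a (n + 1) = poch a n * (a + n) :=
  Finset.prod_range_succ _ _

lemma poch_pos {a : ℝ} (ha : 0 < a) (n : ℕ) : 0 < poch a n :=
  Finset.prod_pos fun _ _ => by positivity

lemma poch_add_one_mul (a : ℝ) (n : ℕ) : poch (a + 1) n * a = poch a n * (a + n) := by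
  induction n with
  | zero => simp [poch]
  | succ n ih =>
    rw [poch_succ, poch_succ]
    push_cast
    linear_combination (a + 1 + n) * ih

lemma poch_div_poch_add_one {a : ℝ} (ha : 0 < a) (n : ℕ) :
    poch a n / poch (a + 1) n = a / (a + n) := by
  have := poch_pos (by linarith : 0 < a + 1) n
  rw [div_eq_div_iff this.ne' (by positivity), mul_comm a, poch_add_one_mul, mul_comm]

lemma four_pow_mul_factorial_mul_poch_three_halves (n : ℕ) :
    (4 : ℝ) ^ n * n ! * poch (3 / 2) n = (2 * n + 1)! := by
  induction n with
  | zero => simp [poch]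
  | succ n ih =>
    rw [poch_succ, show 2 * (n + 1) + 1 = 2 * n + 1 + 1 + 1 by ring, factorial_succ,
      factorial_succ, factorial_succ]
    push_cast
    rw [← ih]
    ring

lemma rpow_add_mul_natCast {y : ℝ} (hy : 0 < y) (p q : ℝ) (n : ℕ) :
    y ^ (p + q * n) = y ^ p * (y ^ q) ^ n := by
  rw [rpow_add hy, rpow_mul hy.le, rpow_natCast]

lemma rpow_le_add_rpow_of_mem_Icc {a b y : ℝ} (ha : 0 < a) (hy : y ∈ Icc a b) (p : ℝ) :
    y ^ p ≤ a ^ p + b ^ p := by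
  have hb : 0 < b := ha.trans_le (hy.1.trans hy.2)
  rcases le_total 0 p with hp | hp
  · linarith [rpow_le_rpow (ha.le.trans hy.1) hy.2 hp, rpow_nonneg ha.le p]
  · linarith [rpow_le_rpow_of_nonpos ha hy.1 hp, rpow_nonneg hb.le p]

theorem hasDerivAt_tsum_div_mul_rpow {a : ℕ → ℝ} {K s q x : ℝ}
    (ha : ∀ n, |a n| ≤ K ^ n / n !) (hs : 0 < s) (hq : 0 ≤ q) (hx : 0 < x) :
    HasDerivAt (fun y => ∑' n : ℕ, a n / (s + q * n) * y ^ (s + q * n))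
      (∑' n : ℕ, a n * x ^ (s - 1 + q * n)) x := by
  have hK : 0 ≤ K := by simpa using (abs_nonneg _).trans (ha 1)
  have hsn (n : ℕ) : s ≤ s + q * n := by simp only [le_add_iff_nonneg_right]; positivity
  set C := (x / 2) ^ (s - 1) + (x + 1) ^ (s - 1)
  have hxt : x ∈ Ioo (x / 2) (x + 1) := ⟨by linarith, by linarith⟩
  refine hasDerivAt_tsum_of_isPreconnected (t := Ioo (x / 2) (x + 1))
    (g := fun n y => a n / (s + q * n) * y ^ (s + q * n))
    (g' := fun n y => a n * y ^ (s - 1 + q * n))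
    (u := fun n => C * (K * (x + 1) ^ q) ^ n / n !) ?_ isOpen_Ioo isPreconnected_Ioo
    (fun n y hy => ?_) (fun n y hy => ?_) hxt ?_ hxt
  · simpa only [mul_div_assoc] using (summable_pow_div_factorial _).mul_left C
  · have hy : 0 < y := by linarith [hy.1]
    refine ((hasDerivAt_rpow_const (p := s + q * n) (Or.inl hy.ne')).const_mul
      (a n / (s + q * n))).congr_deriv ?_
    rw [show s + q * n - 1 = s - 1 + q * n by ring]
    field_simp [(hs.trans_le (hsn n)).ne']
  · have hy0 : 0 < y := by linarith [hy.1]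
    have hyC : y ^ (s - 1) ≤ C :=
      rpow_le_add_rpow_of_mem_Icc (by linarith) (Ioo_subset_Icc_self hy) _
    have hyq : (y ^ q) ^ n ≤ ((x + 1) ^ q) ^ n :=
      pow_le_pow_left₀ (rpow_nonneg hy0.le _) (rpow_le_rpow hy0.le hy.2.le hq) n
    rw [norm_mul, norm_eq_abs, norm_of_nonneg (rpow_nonneg hy0.le _),
      rpow_add_mul_natCast hy0, mul_pow]
    calc |a n| * (y ^ (s - 1) * (y ^ q) ^ n)
        ≤ K ^ n / n ! * (C * ((x + 1) ^ q) ^ n) := by gcongr; exact ha n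
      _ = C * (K ^ n * ((x + 1) ^ q) ^ n) / n ! := by ring
  · refine .of_norm_bounded (g := fun n => x ^ s / s * (K * x ^ q) ^ n / n !)
      (by simpa only [mul_div_assoc] using (summable_pow_div_factorial _).mul_left _)
      fun n => ?_
    rw [norm_mul, norm_div, norm_eq_abs, norm_of_nonneg (hs.le.trans (hsn n)),
      norm_of_nonneg (rpow_nonneg hx.le _), rpow_add_mul_natCast hx, mul_pow]
    calc |a n| / (s + q * n) * (x ^ s * (x ^ q) ^ n)
        ≤ K ^ n / n ! / s * (x ^ s * (x ^ q) ^ n) := by gcongr; exacts [ha n, hsn n]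
      _ = x ^ s / s * (K ^ n * (x ^ q) ^ n) / n ! := by ring

/-- The coefficient of `t ^ (2 * n)` in `sin (l * t) / (l * t)`. -/
noncomputable def sinCoeff (l : ℝ) (n : ℕ) : ℝ := (-1) ^ n * l ^ (2 * n) / (2 * n + 1)!

lemma abs_sinCoeff_le (l : ℝ) (n : ℕ) : |sinCoeff l n| ≤ (l ^ 2) ^ n / n ! := by
  rw [sinCoeff, abs_div, abs_mul, abs_pow, abs_neg, abs_one, one_pow, one_mul, abs_pow,
    pow_mul, sq_abs, Nat.abs_cast]
  exact div_le_div_of_nonneg_left (by positivity) (by positivity)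
    (mod_cast factorial_le (by omega))

theorem hasSum_sinCoeff_mul_rpow {l x : ℝ} (hl : l ≠ 0) (hx : 0 < x) (β α : ℝ) :
    HasSum (fun n : ℕ => sinCoeff l n * x ^ (β - α + 2 * β * n))
      (sin (l * x ^ β) / (l * x ^ α)) := by
  refine ((hasSum_sin (l * x ^ β)).div_const (l * x ^ α)).congr_fun fun n => ?_
  have hxα : x ^ α ≠ 0 := (rpow_pos_of_pos hx α).ne'
  have hpow : (x ^ β) ^ (2 * n + 1) = x ^ (β - α + 2 * β * n) * x ^ α := by
    rw [← rpow_add hx, ← rpow_natCast, ← rpow_mul hx.le]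
    push_cast
    ring_nf
  rw [sinCoeff, mul_pow, hpow, pow_succ]
  field_simp

lemma poch_series_term_eq {β e : ℝ} (hβ : 0 < β) (he : 0 < e) (l : ℝ) {y : ℝ} (hy : 0 < y)
    (n : ℕ) :
    y ^ e / e * (poch (e / (2 * β)) n / (poch (e / (2 * β) + 1) n * poch (3 / 2) n) *
        (-(l ^ 2 * y ^ (2 * β)) / 4) ^ n / n !)
      = sinCoeff l n / (e + 2 * β * n) * y ^ (e + 2 * β * n) := by
  have hratio := poch_div_poch_add_one (by positivity : 0 < e / (2 * β)) n
  have hP := poch_pos (by positivity : 0 < e / (2 * β) + 1) n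
  rw [div_eq_iff hP.ne'] at hratio
  have hQ := poch_pos (by norm_num : (0 : ℝ) < 3 / 2) n
  rw [hratio, rpow_add_mul_natCast hy, sinCoeff, ← four_pow_mul_factorial_mul_poch_three_halves,
    div_pow, neg_pow, mul_pow, ← pow_mul]
  generalize poch (e / (2 * β) + 1) n = P at hP ⊢
  generalize poch (3 / 2) n = Q at hQ ⊢
  field_simp

theorem stmt_7 (β α l : ℝ) (hβ : 1 ≤ β) (hα : α < β + 1) (hl : l ≠ 0)
    (c : ℝ) (hc : c = -α / (2 * β) + 1 / (2 * β) + 1 / 2) (x : ℝ) (hx : 0 < x) :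
    HasDerivAt (fun y : ℝ => y ^ (β - α + 1) / (β - α + 1) *
        ∑' n : ℕ, poch c n / (poch (c + 1) n * poch (3/2) n) *
          (-(l ^ 2 * y ^ (2 * β)) / 4) ^ n / (n.factorial : ℝ))
      (Real.sin (l * x ^ β) / (l * x ^ α)) x := by
  have hβ0 : 0 < β := by linarith
  have he : 0 < β - α + 1 := by linarith
  obtain rfl : c = (β - α + 1) / (2 * β) := by rw [hc]; field_simp; ring
  have hderiv := hasDerivAt_tsum_div_mul_rpow (q := 2 * β) (abs_sinCoeff_le l) he
    (by positivity) hx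
  rw [add_sub_cancel_right, (hasSum_sinCoeff_mul_rpow hl hx β α).tsum_eq] at hderiv
  refine hderiv.congr_of_eventuallyEq ?_
  filter_upwards [Ioi_mem_nhds hx] with y hy
  rw [← tsum_mul_left]
  exact tsum_congr (poch_series_term_eq hβ0 he l hy)
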